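/- In the crash-fault counting algorithm, suppose no node crashes in round t, i.e. ρ(u) ≠ t for every node u. Then for every round t' > t: c(u,t') = c(v,t') for all nodes u, v ∉ F(t'), and c(u,t'+1) = c(u,t') + 1 mod C for every node u ∉ F(t'). -/
import Mathlib


/-- Lemma: a crash-free round stabilises the crash-tolerant
counter.  Crash-fault model: each node `u` has a crash round `ρ(u) ∈ ℕ∞`
(`⊤` if it never crashes) and `F(t) = {u : ρ(u) ≤ t}`.  Counters
`c(v,t) ∈ {0,…,C−1}` with arbitrary round-1 values.  Received values
`R(v,u,t)`: equal to `c(u,t)` before the crash round of `u`, `∗ = none` after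
it, and arbitrarily one of the two in the crash round itself.  Update rule for
each round `t ≥ 1` and each node `v` with `ρ(v) > t`: with
`U(v,t) = {u : R(v,u,t) ≠ ∗}`, set `c(v,t+1) = x + 1 mod C` if some value `x`
is reported by a strict majority of `U(v,t)`, and `c(v,t+1) = 0` otherwise.
If no node crashes in round `t` (i.e. `ρ(u) ≠ t` for every `u`), then for
every round `t' > t`: all nodes `u, v ∉ F(t')` agree on `c(·,t')`, and every
node `u ∉ F(t')` satisfies `c(u,t'+1) = c(u,t') + 1 mod C`. -/
theorem crash_free_round_stabilises {V : Type*} [Fintype V] [DecidableEq V]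
    (C : ℕ) (hC : 1 ≤ C)
    (ρ : V → ℕ∞) (c : V → ℕ → ℕ) (R : V → V → ℕ → Option ℕ)
    (hcrange : ∀ v t, c v t < C)
    (hR1 : ∀ (v u : V) (t : ℕ), (t : ℕ∞) < ρ u → R v u t = some (c u t))
    (hR2 : ∀ (v u : V) (t : ℕ), ρ u < (t : ℕ∞) → R v u t = none)
    (hR3 : ∀ (v u : V) (t : ℕ), ρ u = (t : ℕ∞) → R v u t = some (c u t) ∨ R v u t = none)
    (hupd : ∀ t : ℕ, 1 ≤ t → ∀ v : V, (t : ℕ∞) < ρ v →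
      (∀ x, (Finset.univ.filter fun u => R v u t ≠ none).card <
          2 * ((Finset.univ.filter fun u => R v u t ≠ none).filter
                fun u => R v u t = some x).card →
        c v (t + 1) = (x + 1) % C) ∧
      ((∀ x, ¬((Finset.univ.filter fun u => R v u t ≠ none).card <
          2 * ((Finset.univ.filter fun u => R v u t ≠ none).filter
                fun u => R v u t = some x).card)) →
        c v (t + 1) = 0))
    (t : ℕ) (ht : 1 ≤ t) (hnocrash : ∀ u, ρ u ≠ (t : ℕ∞)) :
    ∀ t' : ℕ, t < t' →
      (∀ u v : V, (t' : ℕ∞) < ρ u → (t' : ℕ∞) < ρ v → c u t' = c v t') ∧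
      (∀ u : V, (t' : ℕ∞) < ρ u → c u (t' + 1) = (c u t' + 1) % C) := by
  classical
  -- step lemma: if all nodes alive at round s agree on value d, then every node
  -- alive strictly past s increments.
  have hcast : ∀ s : ℕ, ((s + 1 : ℕ) : ℕ∞) = (s : ℕ∞) + 1 := by
    intro s; push_cast; ring
  have hle_of_lt : ∀ (s : ℕ) (u : V), (s : ℕ∞) < ρ u → ((s+1 : ℕ) : ℕ∞) ≤ ρ u := by
    intro s u h
    rw [hcast]
    exact ENat.add_one_le_iff (by simp) |>.2 h
  have hstep : ∀ s : ℕ, 1 ≤ s → ∀ d : ℕ, (∀ u : V, (s : ℕ∞) ≤ ρ u → c u s = d) →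
      ∀ v : V, (s : ℕ∞) < ρ v → c v (s + 1) = (d + 1) % C := by
    intro s hs d hd v hv
    have hfilt : ((Finset.univ.filter fun u => R v u s ≠ none).filter
        fun u => R v u s = some d) = (Finset.univ.filter fun u => R v u s ≠ none) := by
      rw [Finset.filter_eq_self]
      intro u hu
      rw [Finset.mem_filter] at hu
      have hne := hu.2
      rcases lt_trichotomy (ρ u) ((s : ℕ∞)) with h | h | h
      · exact absurd (hR2 v u s h) hne
      · rcases hR3 v u s h with h' | h'
        · rw [h', hd u (le_of_eq h.symm)]
        · exact absurd h' hne
      · rw [hR1 v u s h, hd u (le_of_lt h)]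
    have hmem : v ∈ (Finset.univ.filter fun u => R v u s ≠ none) := by
      simp only [Finset.mem_filter, Finset.mem_univ, true_and]
      rw [hR1 v v s hv]; simp
    have hcardpos : 0 < (Finset.univ.filter fun u => R v u s ≠ none).card :=
      Finset.card_pos.2 ⟨v, hmem⟩
    exact (hupd s hs v hv).1 d (by rw [hfilt]; omega)
  -- invariant: for every s ≥ t+1 there is a common value among alive nodes
  have hinv : ∀ s : ℕ, t + 1 ≤ s → ∃ d : ℕ, ∀ u : V, (s : ℕ∞) ≤ ρ u → c u s = d := by
    intro s hs
    induction s, hs using Nat.le_induction with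
    | base =>
      -- analyze round t, which is crash-free
      have hR : ∀ (v u : V), ((t : ℕ∞) < ρ u → R v u t = some (c u t)) ∧
          (¬ (t : ℕ∞) < ρ u → R v u t = none) := by
        intro v u
        rcases lt_trichotomy (ρ u) ((t : ℕ∞)) with h | h | h
        · exact ⟨fun h' => absurd h' (not_lt.2 (le_of_lt h)), fun _ => hR2 v u t h⟩
        · exact absurd h (hnocrash u)
        · exact ⟨fun _ => hR1 v u t h, fun h' => absurd h h'⟩
      have hA : ∀ v : V, (Finset.univ.filter fun u => R v u t ≠ none)
          = (Finset.univ.filter fun u => (t : ℕ∞) < ρ u) := by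
        intro v
        apply Finset.filter_congr
        intro u _
        constructor
        · intro hne
          by_contra h
          exact hne ((hR v u).2 h)
        · intro h
          rw [(hR v u).1 h]; simp
      have hS : ∀ (v : V) (x : ℕ), ((Finset.univ.filter fun u => R v u t ≠ none).filter
          fun u => R v u t = some x)
          = ((Finset.univ.filter fun u => (t : ℕ∞) < ρ u).filter fun u => c u t = x) := by
        intro v x
        rw [hA]
        apply Finset.filter_congr
        intro u hu
        rw [Finset.mem_filter] at hu
        rw [(hR v u).1 hu.2]
        simp
      set A := Finset.univ.filter fun u => (t : ℕ∞) < ρ u with hAdef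
      by_cases hmaj : ∃ x, A.card < 2 * (A.filter fun u => c u t = x).card
      · obtain ⟨x, hx⟩ := hmaj
        refine ⟨(x + 1) % C, fun u hu => ?_⟩
        have hu' : (t : ℕ∞) < ρ u :=
          lt_of_lt_of_le (by exact_mod_cast Nat.lt_succ_self t) hu
        exact (hupd t ht u hu').1 x (by rw [hS, hA]; exact hx)
      · push_neg at hmaj
        refine ⟨0, fun u hu => ?_⟩
        have hu' : (t : ℕ∞) < ρ u :=
          lt_of_lt_of_le (by exact_mod_cast Nat.lt_succ_self t) hu
        exact (hupd t ht u hu').2 (fun x => by rw [hS, hA]; exact not_lt.2 (hmaj x))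
    | succ s hs ih =>
      obtain ⟨d, hd⟩ := ih
      refine ⟨(d + 1) % C, fun u hu => ?_⟩
      have hu' : (s : ℕ∞) < ρ u :=
        lt_of_lt_of_le (by exact_mod_cast Nat.lt_succ_self s) hu
      exact hstep s (by omega) d hd u hu'
  intro t' ht'
  obtain ⟨d, hd⟩ := hinv t' (by omega)
  constructor
  · intro u v hu hv
    rw [hd u (le_of_lt hu), hd v (le_of_lt hv)]
  · intro u hu
    rw [hd u (le_of_lt hu)]
    exact hstep t' (by omega) d hd u hu
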